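/- arXiv:1107.5756 — 3 statements merged into one kernel-verified Lean document; each statement's English description precedes it below -/
import Mathlib

section
/- Let $D_1, D_2 \ge 0$ and let $g_1, g_2 \in \mathbb{Z}[z_1, \ldots, z_q]$ be nonzero polynomials of total degrees $D_1, D_2$ respectively, and let $N$ be an integer with $N \ge \max(D_1, D_2)$. Then the set $\mathcal{S} := \{\mathbf{u} \in \mathbb{Z}^q : |\mathbf{u}| \le N,\ g_2(\mathbf{u}) \ne 0\}$ is nonempty, and for every place $p \in \{\infty\} \cup \{\text{primes}\}$ of $\mathbb{Q}$ one has $|g_1|_p \le (4N)^{q D_1 (D_1+1)/2} \cdot \max\{|g_1(\mathbf{u})|_p : \mathbf{u} \in \mathcal{S}\}$, where $|g_1|_p$ denotes the maximum of the $p$-adic (resp. archimedean) absolute values of the coefficients of $g_1$ and $|\mathbf{u}| = \max_i |u_i|$. -/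
open Polynomial Finset

structure GoodAbs (K : Type*) [Field K] [LinearOrder K] [IsStrictOrderedRing K] where
  v : ℚ → K
  zero : v 0 = 0
  nonneg : ∀ x, 0 ≤ v x
  mul : ∀ x y, v (x * y) = v x * v y
  add : ∀ x y, v (x + y) ≤ v x + v y
  quot : ∀ m n : ℤ, n ≠ 0 → v ((m : ℚ) / (n : ℚ)) ≤ max ((|m| : ℤ) : K) ((|n| : ℤ) : K)

variable {K : Type*} [Field K] [LinearOrder K] [IsStrictOrderedRing K]

lemma GoodAbs.sum_le (A : GoodAbs K) {ι : Type*} (s : Finset ι) (f : ι → ℚ) :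
    A.v (∑ i ∈ s, f i) ≤ ∑ i ∈ s, A.v (f i) := by
  classical
  induction s using Finset.induction with
  | empty => simp [A.zero]
  | insert _ _ hx ih =>
      rw [Finset.sum_insert hx, Finset.sum_insert hx]
      exact le_trans (A.add _ _) (by gcongr)

lemma prod_coeff_bound {ι : Type*} [DecidableEq ι] (N : ℕ) (s : Finset ι) (c : ι → ℤ)
    (hc : ∀ i ∈ s, |c i| ≤ (N : ℤ)) :
    ∀ k, |(∏ i ∈ s, (X - C (c i))).coeff k| ≤ ((N : ℤ) + 1) ^ s.card := by
  induction s using Finset.induction with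
  | empty =>
      intro k
      simp only [Finset.prod_empty, Polynomial.coeff_one, Finset.card_empty, pow_zero]
      split <;> simp
  | @insert a s hx ih =>
      intro k
      have hca : |c a| ≤ (N : ℤ) := hc a (Finset.mem_insert_self a s)
      have ih' := ih (fun i hi => hc i (Finset.mem_insert_of_mem hi))
      rw [Finset.prod_insert hx, Finset.card_insert_of_notMem hx]
      have hexp : (X - C (c a)) * ∏ i ∈ s, (X - C (c i)) =
          X * (∏ i ∈ s, (X - C (c i))) - C (c a) * ∏ i ∈ s, (X - C (c i)) := by ring
      rw [hexp]
      set P := ∏ i ∈ s, (X - C (c i)) with hP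
      have hB : ∀ k, |P.coeff k| ≤ ((N : ℤ) + 1) ^ s.card := ih'
      have h1 : |(X * P).coeff k| ≤ ((N : ℤ) + 1) ^ s.card := by
        cases k with
        | zero => simpa using pow_nonneg (by positivity) _
        | succ k => rw [Polynomial.coeff_X_mul]; exact hB k
      calc |(X * P - C (c a) * P).coeff k| = |(X * P).coeff k - c a * P.coeff k| := by
            rw [Polynomial.coeff_sub, Polynomial.coeff_C_mul]
        _ ≤ |(X * P).coeff k| + |c a| * |P.coeff k| := by
            refine le_trans (abs_sub _ _) ?_
            rw [abs_mul]
        _ ≤ ((N : ℤ) + 1) ^ s.card + (N : ℤ) * ((N : ℤ) + 1) ^ s.card := by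
            gcongr <;> first | exact abs_nonneg _ | exact hB k | positivity
        _ = ((N : ℤ) + 1) ^ (s.card + 1) := by ring

lemma nat_factor_bound (D N : ℕ) (hN : 1 ≤ N) :
    (D + 1) * (2 * N) ^ D ≤ (4 * N) ^ (D * (D + 1) / 2) := by
  rcases Nat.eq_zero_or_pos D with rfl | hD
  · simp
  have h1 : D + 1 ≤ 2 ^ D := Nat.lt_two_pow_self
  have h2 : (D + 1) * (2 * N) ^ D ≤ 2 ^ D * (2 * N) ^ D := by gcongr
  have h3 : 2 ^ D * (2 * N) ^ D = (4 * N) ^ D := by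
    rw [← Nat.mul_pow]; ring_nf
  have h4 : D ≤ D * (D + 1) / 2 := by
    rw [Nat.le_div_iff_mul_le (by norm_num)]
    nlinarith
  have h5 : (4 * N : ℕ) ^ D ≤ (4 * N) ^ (D * (D + 1) / 2) :=
    Nat.pow_le_pow_right (by omega) h4
  omega

lemma oneVar (A : GoodAbs K) (D N : ℕ) (hN : 1 ≤ N)
    (ts : Fin (D + 1) → ℤ) (hinj : Function.Injective ts) (hts : ∀ j, |ts j| ≤ (N : ℤ))
    (φ : ℚ[X]) (hφ : φ.natDegree ≤ D) (M : K)
    (hM : ∀ j, A.v (φ.eval ((ts j : ℚ))) ≤ M) :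
    ∀ k, A.v (φ.coeff k) ≤ (4 * (N : K)) ^ (D * (D + 1) / 2) * M := by
  classical
  intro k
  have hM0 : 0 ≤ M := le_trans (A.nonneg _) (hM 0)
  set vv : Fin (D + 1) → ℚ := fun j => ((ts j : ℚ)) with hvv
  have hvinj : Function.Injective vv := fun a b h => hinj (Int.cast_injective h)
  have hvs : Set.InjOn vv (Finset.univ : Finset (Fin (D + 1))) := fun a _ b _ h => hvinj h
  have hdeg : φ.degree < (Finset.univ : Finset (Fin (D + 1))).card := by
    rw [Finset.card_univ, Fintype.card_fin]
    calc φ.degree ≤ (φ.natDegree : WithBot ℕ) := Polynomial.degree_le_natDegree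
      _ ≤ (D : WithBot ℕ) := by exact_mod_cast hφ
      _ < ((D + 1 : ℕ) : WithBot ℕ) := by exact_mod_cast Nat.lt_succ_self D
  have hrep := Lagrange.eq_interpolate hvs hdeg
  -- basis coefficient bound
  have hbasis : ∀ j : Fin (D + 1), ∀ k : ℕ,
      A.v ((Lagrange.basis Finset.univ vv j).coeff k) ≤ (((2 * N : ℤ) ^ D : ℤ) : K) := by
    intro j k
    set s' := (Finset.univ : Finset (Fin (D + 1))).erase j with hs'
    have hcard : s'.card = D := by
      rw [hs', Finset.card_erase_of_mem (Finset.mem_univ j), Finset.card_univ, Fintype.card_fin]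
      omega
    have hbeq : Lagrange.basis Finset.univ vv j =
        C ((∏ i ∈ s', (vv j - vv i))⁻¹) * ∏ i ∈ s', (X - C (vv i)) := by
      rw [Lagrange.basis]
      simp only [Lagrange.basisDivisor]
      rw [← hs', Finset.prod_mul_distrib, ← map_prod (C : ℚ →+* ℚ[X]), Finset.prod_inv_distrib]
    set n : ℤ := ∏ i ∈ s', (ts j - ts i) with hn
    have hn0 : n ≠ 0 := by
      rw [hn]
      exact Finset.prod_ne_zero_iff.2 fun i hi => sub_ne_zero.2
        (fun h => (Finset.mem_erase.1 hi).1.symm (hinj h))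
    have hnabs : |n| ≤ (2 * N : ℤ) ^ D := by
      rw [hn, Finset.abs_prod]
      calc ∏ i ∈ s', |ts j - ts i| ≤ ∏ _i ∈ s', (2 * N : ℤ) := by
            refine Finset.prod_le_prod (fun i _ => abs_nonneg _) (fun i _ => ?_)
            have h1 := hts j; have h2 := hts i
            rw [abs_le] at h1 h2 ⊢
            omega
        _ = (2 * N : ℤ) ^ D := by rw [Finset.prod_const, hcard]
    set Pz : ℤ[X] := ∏ i ∈ s', (X - C (ts i)) with hPz
    have hm : |Pz.coeff k| ≤ (2 * N : ℤ) ^ D := by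
      calc |Pz.coeff k| ≤ ((N : ℤ) + 1) ^ s'.card :=
            prod_coeff_bound N s' ts (fun i _ => hts i) k
        _ ≤ (2 * N : ℤ) ^ D := by
            rw [hcard]; gcongr <;> omega
    have hmap : (∏ i ∈ s', (X - C (vv i))) = Pz.map (Int.castRingHom ℚ) := by
      rw [hPz, Polynomial.map_prod]
      refine Finset.prod_congr rfl fun i _ => ?_
      simp [hvv]
    have hprodcast : (∏ i ∈ s', (vv j - vv i)) = ((n : ℤ) : ℚ) := by
      rw [hn]; push_cast; rfl
    have hcoeff : (Lagrange.basis Finset.univ vv j).coeff k = ((Pz.coeff k : ℚ)) / ((n : ℤ) : ℚ) := by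
      rw [hbeq, Polynomial.coeff_C_mul, hmap, Polynomial.coeff_map, hprodcast]
      simp [div_eq_inv_mul]
    rw [hcoeff]
    refine le_trans (A.quot _ _ hn0) ?_
    have c1 : ((|Pz.coeff k| : ℤ) : K) ≤ (((2 * N : ℤ) ^ D : ℤ) : K) := by exact_mod_cast hm
    have c2 : ((|n| : ℤ) : K) ≤ (((2 * N : ℤ) ^ D : ℤ) : K) := by exact_mod_cast hnabs
    exact max_le c1 c2
  -- expand φ via interpolation
  have hcoeffsum : φ.coeff k =
      ∑ j ∈ (Finset.univ : Finset (Fin (D + 1))),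
        φ.eval (vv j) * (Lagrange.basis Finset.univ vv j).coeff k := by
    conv_lhs => rw [hrep]
    rw [Lagrange.interpolate_apply, Polynomial.finset_sum_coeff]
    exact Finset.sum_congr rfl fun j _ => by rw [Polynomial.coeff_C_mul]
  rw [hcoeffsum]
  calc A.v (∑ j ∈ Finset.univ, φ.eval (vv j) * (Lagrange.basis Finset.univ vv j).coeff k)
      ≤ ∑ j ∈ Finset.univ, A.v (φ.eval (vv j) * (Lagrange.basis Finset.univ vv j).coeff k) :=
        A.sum_le _ _
    _ ≤ ∑ j ∈ (Finset.univ : Finset (Fin (D + 1))), M * (((2 * N : ℤ) ^ D : ℤ) : K) := by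
        refine Finset.sum_le_sum fun j _ => ?_
        rw [A.mul]
        exact mul_le_mul (hM j) (hbasis j k) (A.nonneg _) hM0
    _ = (D + 1 : K) * ((2 * (N : K)) ^ D) * M := by
        rw [Finset.sum_const, Finset.card_univ, Fintype.card_fin]
        push_cast
        ring
    _ ≤ (4 * (N : K)) ^ (D * (D + 1) / 2) * M := by
        refine mul_le_mul_of_nonneg_right ?_ hM0
        have := nat_factor_bound D N hN
        calc (D + 1 : K) * (2 * (N : K)) ^ D = (((D + 1) * (2 * N) ^ D : ℕ) : K) := by
              push_cast; ring
          _ ≤ (((4 * N) ^ (D * (D + 1) / 2) : ℕ) : K) := by exact_mod_cast this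
          _ = (4 * (N : K)) ^ (D * (D + 1) / 2) := by push_cast; ring

open MvPolynomial in
lemma sub_eval {q : ℕ} (g : MvPolynomial (Fin (q + 1)) ℤ) (t : ℤ) (u : Fin q → ℤ) :
    MvPolynomial.eval u (Polynomial.eval (MvPolynomial.C t) (MvPolynomial.finSuccEquiv ℤ q g)) =
      MvPolynomial.eval (Fin.cons t u) g := by
  rw [MvPolynomial.eval_eq_eval_mv_eval']
  rw [Polynomial.eval_map]
  rw [← Polynomial.eval₂_at_apply (MvPolynomial.eval u) (MvPolynomial.C t)]
  simp

open MvPolynomial in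
lemma sub_totalDegree {q : ℕ} (g : MvPolynomial (Fin (q + 1)) ℤ) (t : ℤ) :
    (Polynomial.eval (MvPolynomial.C t) (MvPolynomial.finSuccEquiv ℤ q g)).totalDegree ≤
      g.totalDegree := by
  set P := MvPolynomial.finSuccEquiv ℤ q g with hP
  rw [Polynomial.eval_eq_sum_range]
  refine le_trans (MvPolynomial.totalDegree_finset_sum _ _) ?_
  refine Finset.sup_le fun k _ => ?_
  by_cases h : P.coeff k = 0
  · simp [h]
  refine le_trans (MvPolynomial.totalDegree_mul _ _) ?_
  have h1 : (P.coeff k).totalDegree ≤ g.totalDegree :=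
    le_trans (Nat.le_add_right _ k) (MvPolynomial.totalDegree_coeff_finSuccEquiv_add_le g k h)
  have h2 : ((MvPolynomial.C t : MvPolynomial (Fin q) ℤ) ^ k).totalDegree = 0 := by
    rw [← map_pow, MvPolynomial.totalDegree_C]
  omega

open MvPolynomial in
lemma keyLemma (A : GoodAbs K) :
    ∀ (q N : ℕ), 1 ≤ N → ∀ (D : ℕ), D ≤ N → ∀ (g₁ g₂ : MvPolynomial (Fin q) ℤ),
    g₂ ≠ 0 → g₁.totalDegree ≤ D → g₂.totalDegree ≤ N →
    ∃ u : Fin q → ℤ, (∀ i, |u i| ≤ (N : ℤ)) ∧ MvPolynomial.eval u g₂ ≠ 0 ∧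
      ∀ d ∈ g₁.support, A.v ((MvPolynomial.coeff d g₁ : ℤ) : ℚ) ≤
        (4 * (N : K)) ^ (q * (D * (D + 1) / 2)) * A.v ((MvPolynomial.eval u g₁ : ℤ) : ℚ) := by
  intro q
  induction q with
  | zero =>
      intro N hN D hD g₁ g₂ hg₂ hdeg₁ hdeg₂
      refine ⟨fun i => 0, fun i => by simp, ?_, ?_⟩
      · obtain ⟨c₂, rfl⟩ := MvPolynomial.C_surjective (Fin 0) g₂
        rw [MvPolynomial.eval_C]
        intro h
        exact hg₂ (by rw [h, map_zero])
      · intro d hd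
        obtain ⟨c₁, rfl⟩ := MvPolynomial.C_surjective (Fin 0) g₁
        rw [MvPolynomial.mem_support_iff, MvPolynomial.coeff_C] at hd
        by_cases h0 : (0 : Fin 0 →₀ ℕ) = d
        · rw [← h0]
          simp only [MvPolynomial.coeff_C, if_pos rfl, MvPolynomial.eval_C, Nat.zero_mul,
            pow_zero, one_mul]
          exact le_refl _
        · simp [h0] at hd
  | succ q IH =>
      intro N hN D hD g₁ g₂ hg₂ hdeg₁ hdeg₂
      classical
      set F := MvPolynomial.finSuccEquiv ℤ q with hF
      set P₁ := F g₁ with hP₁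
      set P₂ := F g₂ with hP₂
      have hP₂0 : P₂ ≠ 0 := by
        intro h
        exact hg₂ (F.injective (by rw [map_zero]; exact h))
      have hP₁deg : P₁.natDegree ≤ D := by
        rw [hP₁, hF, MvPolynomial.natDegree_finSuccEquiv]
        exact le_trans (MvPolynomial.degreeOf_le_totalDegree g₁ 0) hdeg₁
      -- the good node set
      set T : Finset ℤ := (Finset.Icc (-(N : ℤ)) (N : ℤ)).filter
        (fun t => Polynomial.eval (MvPolynomial.C t) P₂ ≠ 0) with hT
      have hTcard : D + 1 ≤ T.card := by
        set bad : Finset ℤ := (Finset.Icc (-(N : ℤ)) (N : ℤ)).filter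
          (fun t => ¬ Polynomial.eval (MvPolynomial.C t) P₂ ≠ 0) with hbad
        have hbadcard : bad.card ≤ N := by
          have hmap : ∀ t ∈ bad,
              (MvPolynomial.C t : MvPolynomial (Fin q) ℤ) ∈ P₂.roots.toFinset := by
            intro t ht
            rw [Multiset.mem_toFinset, Polynomial.mem_roots hP₂0]
            exact not_not.1 (Finset.mem_filter.1 ht).2
          calc bad.card ≤ P₂.roots.toFinset.card :=
                Finset.card_le_card_of_injOn _ hmap
                  (fun t _ t' _ h => MvPolynomial.C_injective _ _ h)
            _ ≤ Multiset.card P₂.roots := P₂.roots.toFinset_card_le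
            _ ≤ P₂.natDegree := Polynomial.card_roots' P₂
            _ ≤ N := by
                rw [hP₂, hF, MvPolynomial.natDegree_finSuccEquiv]
                exact le_trans (MvPolynomial.degreeOf_le_totalDegree g₂ 0) hdeg₂
        have hsplit : T.card + bad.card = (Finset.Icc (-(N : ℤ)) (N : ℤ)).card := by
          rw [hT, hbad]
          exact Finset.card_filter_add_card_filter_not _
        have hIcc : (Finset.Icc (-(N : ℤ)) (N : ℤ)).card = 2 * N + 1 := by
          rw [Int.card_Icc]
          omega
        omega
      obtain ⟨T', hT'sub, hT'card⟩ := Finset.exists_subset_card_eq hTcard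
      set e := (Finset.equivFinOfCardEq hT'card).symm with he
      set ts : Fin (D + 1) → ℤ := fun j => ((e j : T') : ℤ) with hts
      have htsinj : Function.Injective ts := fun a b h =>
        e.injective (Subtype.ext h)
      have htsT : ∀ j, ts j ∈ T := fun j => hT'sub (e j).2
      have htsabs : ∀ j, |ts j| ≤ (N : ℤ) := by
        intro j
        have := (Finset.mem_filter.1 (htsT j)).1
        rw [Finset.mem_Icc] at this
        rw [abs_le]; exact this
      have htsg₂ : ∀ j, Polynomial.eval (MvPolynomial.C (ts j)) P₂ ≠ 0 := fun j =>
        (Finset.mem_filter.1 (htsT j)).2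
      set g₁s : Fin (D + 1) → MvPolynomial (Fin q) ℤ :=
        fun j => Polynomial.eval (MvPolynomial.C (ts j)) P₁ with hg₁s
      set g₂s : Fin (D + 1) → MvPolynomial (Fin q) ℤ :=
        fun j => Polynomial.eval (MvPolynomial.C (ts j)) P₂ with hg₂s
      set C₂ : K := (4 * (N : K)) ^ (q * (D * (D + 1) / 2)) with hC₂
      have Hj : ∀ j : Fin (D + 1), ∃ u' : Fin q → ℤ, (∀ i, |u' i| ≤ (N : ℤ)) ∧
          MvPolynomial.eval u' (g₂s j) ≠ 0 ∧
          ∀ d ∈ (g₁s j).support, A.v ((MvPolynomial.coeff d (g₁s j) : ℤ) : ℚ) ≤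
            C₂ * A.v ((MvPolynomial.eval u' (g₁s j) : ℤ) : ℚ) := by
        intro j
        by_cases h : g₁s j = 0
        · obtain ⟨u', h1, h2, -⟩ := IH N hN N le_rfl (g₂s j) (g₂s j) (htsg₂ j)
            (le_trans (sub_totalDegree g₂ (ts j)) hdeg₂)
            (le_trans (sub_totalDegree g₂ (ts j)) hdeg₂)
          exact ⟨u', h1, h2, by rw [h]; simp⟩
        · exact IH N hN D hD (g₁s j) (g₂s j) (htsg₂ j)
            (le_trans (sub_totalDegree g₁ (ts j)) hdeg₁)
            (le_trans (sub_totalDegree g₂ (ts j)) hdeg₂)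
      choose uf hu1 hu2 hu3 using Hj
      set W : Fin (D + 1) → K := fun j => A.v ((MvPolynomial.eval (uf j) (g₁s j) : ℤ) : ℚ)
        with hW
      obtain ⟨js, _, hjs⟩ := Finset.exists_max_image Finset.univ W ⟨0, Finset.mem_univ 0⟩
      have hC₂0 : 0 ≤ C₂ := by positivity
      have hWj0 : 0 ≤ W js := A.nonneg _
      have hunif : ∀ (j : Fin (D + 1)) (d : Fin q →₀ ℕ),
          A.v ((MvPolynomial.coeff d (g₁s j) : ℤ) : ℚ) ≤ C₂ * W js := by
        intro j d
        by_cases hd : d ∈ (g₁s j).support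
        · exact le_trans (hu3 j d hd)
            (mul_le_mul_of_nonneg_left (hjs j (Finset.mem_univ j)) hC₂0)
        · rw [MvPolynomial.notMem_support_iff.1 hd]
          push_cast
          rw [A.zero]
          exact mul_nonneg hC₂0 hWj0
      -- the one-variable polynomials
      set ψ : (Fin q →₀ ℕ) → Polynomial ℤ := fun d =>
        ∑ k ∈ Finset.range (D + 1),
          Polynomial.C (MvPolynomial.coeff d (P₁.coeff k)) * Polynomial.X ^ k with hψ
      set φ : (Fin q →₀ ℕ) → Polynomial ℚ := fun d =>
        (ψ d).map (Int.castRingHom ℚ) with hφ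
      have hψdeg : ∀ d, (ψ d).natDegree ≤ D := by
        intro d
        refine Polynomial.natDegree_sum_le_of_forall_le _ _ fun k hk => ?_
        refine le_trans (Polynomial.natDegree_C_mul_le _ _) ?_
        rw [Polynomial.natDegree_X_pow]
        exact Nat.lt_succ_iff.1 (Finset.mem_range.1 hk)
      have hψcoeff : ∀ d k, k ≤ D → (ψ d).coeff k = MvPolynomial.coeff d (P₁.coeff k) := by
        intro d k hk
        rw [hψ]
        simp only [Polynomial.finset_sum_coeff, Polynomial.coeff_C_mul, Polynomial.coeff_X_pow]
        rw [Finset.sum_eq_single k]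
        · rw [if_pos rfl, mul_one]
        · intro b _ hb
          rw [if_neg (Ne.symm hb), mul_zero]
        · intro hk'
          exact absurd (Finset.mem_range.2 (Nat.lt_succ_of_le hk)) hk'
      have hψeval : ∀ d (t : ℤ), (ψ d).eval t =
          MvPolynomial.coeff d (Polynomial.eval (MvPolynomial.C t) P₁) := by
        intro d t
        have hlt : P₁.natDegree < D + 1 := Nat.lt_succ_of_le hP₁deg
        rw [Polynomial.eval_eq_sum_range' hlt (MvPolynomial.C t)]
        rw [MvPolynomial.coeff_sum]
        rw [hψ]
        simp only [Polynomial.eval_finset_sum, Polynomial.eval_mul, Polynomial.eval_C,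
          Polynomial.eval_pow, Polynomial.eval_X]
        refine Finset.sum_congr rfl fun k _ => ?_
        rw [← MvPolynomial.C_pow, mul_comm (P₁.coeff k), MvPolynomial.coeff_C_mul, mul_comm]
      have hφeval : ∀ d (j : Fin (D + 1)),
          (φ d).eval ((ts j : ℚ)) = ((MvPolynomial.coeff d (g₁s j) : ℤ) : ℚ) := by
        intro d j
        rw [hφ]
        simp only
        rw [show ((ts j : ℚ)) = (Int.castRingHom ℚ) (ts j) from rfl, Polynomial.eval_map,
          Polynomial.eval₂_at_apply, hψeval]
        rfl
      have hone : ∀ d k, A.v ((φ d).coeff k) ≤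
          (4 * (N : K)) ^ (D * (D + 1) / 2) * (C₂ * W js) := by
        intro d k
        refine oneVar A D N hN ts htsinj htsabs (φ d) ?_ (C₂ * W js) ?_ k
        · exact le_trans Polynomial.natDegree_map_le (hψdeg d)
        · intro j
          rw [hφeval d j]
          exact hunif j d
      -- assemble
      refine ⟨Fin.cons (ts js) (uf js), ?_, ?_, ?_⟩
      · intro i
        refine Fin.cases ?_ ?_ i
        · simpa using htsabs js
        · intro i'; simpa using hu1 js i'
      · rw [← sub_eval]
        exact hu2 js
      · intro d hd
        have hd0 : d 0 ≤ D := by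
          have h1 : d 0 ≤ g₁.degreeOf 0 := by
            rw [MvPolynomial.degreeOf_eq_sup]
            exact Finset.le_sup (f := fun m => m 0) hd
          exact le_trans h1 (le_trans (MvPolynomial.degreeOf_le_totalDegree g₁ 0) hdeg₁)
        have hkey : MvPolynomial.coeff d g₁ =
            MvPolynomial.coeff d.tail (P₁.coeff (d 0)) := by
          rw [hP₁, hF, MvPolynomial.finSuccEquiv_coeff_coeff, Finsupp.cons_tail]
        have heval : MvPolynomial.eval (Fin.cons (ts js) (uf js)) g₁ =
            MvPolynomial.eval (uf js) (g₁s js) := by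
          rw [hg₁s]; simp only; rw [sub_eval]
        rw [hkey, heval]
        have h1 := hone d.tail (d 0)
        rw [hφ] at h1
        simp only [Polynomial.coeff_map] at h1
        rw [hψcoeff d.tail (d 0) hd0] at h1
        refine le_trans h1 ?_
        rw [hC₂]
        rw [show (q + 1) * (D * (D + 1) / 2) = D * (D + 1) / 2 + q * (D * (D + 1) / 2) by ring,
          pow_add]
        rw [hW]
        ring_nf
        exact le_refl _

noncomputable def realAbs : GoodAbs ℝ where
  v := fun x => |(x : ℝ)|
  zero := by simp
  nonneg := fun x => abs_nonneg _
  mul := fun x y => by push_cast; exact abs_mul _ _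
  add := fun x y => by push_cast; exact abs_add_le _ _
  quot := fun m n hn => by
    have h1 : (1 : ℝ) ≤ |(n : ℝ)| := by
      rw [← Int.cast_abs]
      exact_mod_cast Int.one_le_abs hn
    push_cast
    calc |(m : ℝ) / (n : ℝ)| = |(m : ℝ)| / |(n : ℝ)| := abs_div _ _
      _ ≤ |(m : ℝ)| := div_le_self (abs_nonneg _) h1
      _ ≤ max |(m : ℝ)| |(n : ℝ)| := le_max_left _ _

def padicAbs (p : ℕ) [Fact p.Prime] : GoodAbs ℚ where
  v := padicNorm p
  zero := padicNorm.zero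
  nonneg := padicNorm.nonneg
  mul := padicNorm.mul
  add := padicNorm.triangle_ineq
  quot := fun m n hn => by
    have hmax : ((|n| : ℤ) : ℚ) ≤ max ((|m| : ℤ) : ℚ) ((|n| : ℤ) : ℚ) := le_max_right _ _
    set w := padicValInt p n with hw
    have hdvd : (p : ℤ) ^ w ∣ n := padicValInt_dvd n
    have hle : (p : ℤ) ^ w ≤ |n| := Int.le_of_dvd (abs_pos.2 hn) ((dvd_abs _ _).2 hdvd)
    have hp1 : (1 : ℚ) < p := by exact_mod_cast (Fact.out : p.Prime).one_lt
    have hppos : (0 : ℚ) < (p : ℚ) ^ w := by positivity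
    have hpn : padicNorm p (n : ℚ) = ((p : ℚ) ^ w)⁻¹ := by
      rw [padicNorm.eq_zpow_of_nonzero (by exact_mod_cast hn), padicValRat.of_int, hw,
        zpow_neg, zpow_natCast]
    rw [padicNorm.div, hpn, div_inv_eq_mul]
    calc padicNorm p (m : ℚ) * (p : ℚ) ^ w ≤ 1 * (p : ℚ) ^ w := by
          gcongr
          exact padicNorm.of_int m
      _ = (p : ℚ) ^ w := one_mul _
      _ ≤ ((|n| : ℤ) : ℚ) := by exact_mod_cast hle
      _ ≤ _ := hmax


/-- Let `g₁, g₂ ∈ ℤ[z₁,…,z_q]` be nonzero of total degrees `D₁, D₂`, and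
`N ≥ max(D₁, D₂)` an integer. Then `S = {u ∈ ℤ^q : |u| ≤ N, g₂(u) ≠ 0}` is nonempty and
for every place `p` of `ℚ` (archimedean or `p`-adic),
`|g₁|_p ≤ (4N)^{qD₁(D₁+1)/2} · max{|g₁(u)|_p : u ∈ S}`, where `|g₁|_p` is the maximum of
the `p`-adic (resp. ordinary) absolute values of the coefficients of `g₁`.
(The maximum over the finite nonempty set `S` is expressed by an existential.) -/
theorem stmt_14 (q D₁ D₂ N : ℕ) (g₁ g₂ : MvPolynomial (Fin q) ℤ)
    (hg₁ : g₁ ≠ 0) (hg₂ : g₂ ≠ 0)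
    (hD₁ : g₁.totalDegree = D₁) (hD₂ : g₂.totalDegree = D₂)
    (hN : D₁ ≤ N ∧ D₂ ≤ N) :
    (∃ u : Fin q → ℤ, (∀ i, |u i| ≤ (N : ℤ)) ∧ MvPolynomial.eval u g₂ ≠ 0) ∧
    (∃ u : Fin q → ℤ, (∀ i, |u i| ≤ (N : ℤ)) ∧ MvPolynomial.eval u g₂ ≠ 0 ∧
      ∀ d ∈ g₁.support, ((|MvPolynomial.coeff d g₁| : ℤ) : ℝ) ≤
        (4 * N : ℝ) ^ (q * (D₁ * (D₁ + 1) / 2)) * ((|MvPolynomial.eval u g₁| : ℤ) : ℝ)) ∧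
    (∀ p : ℕ, p.Prime →
      ∃ u : Fin q → ℤ, (∀ i, |u i| ≤ (N : ℤ)) ∧ MvPolynomial.eval u g₂ ≠ 0 ∧
        ∀ d ∈ g₁.support, padicNorm p (((MvPolynomial.coeff d g₁ : ℤ) : ℚ)) ≤
          (4 * N : ℚ) ^ (q * (D₁ * (D₁ + 1) / 2)) *
            padicNorm p (((MvPolynomial.eval u g₁ : ℤ) : ℚ))) := by
  by_cases hN0 : N = 0
  · subst hN0
    have hD₁0 : D₁ = 0 := Nat.le_zero.1 hN.1
    have hD₂0 : D₂ = 0 := Nat.le_zero.1 hN.2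
    subst hD₁0; subst hD₂0
    have hsupp₁ : ∀ d ∈ g₁.support, d = 0 := by
      intro d hd
      have := (MvPolynomial.totalDegree_eq_zero_iff _ g₁).1 hD₁ d hd
      ext x; exact this x
    have hsupp₂ : ∀ d ∈ g₂.support, d = 0 := by
      intro d hd
      have := (MvPolynomial.totalDegree_eq_zero_iff _ g₂).1 hD₂ d hd
      ext x; exact this x
    have heval : ∀ g : MvPolynomial (Fin q) ℤ,
        MvPolynomial.eval (fun _ => (0 : ℤ)) g = MvPolynomial.coeff 0 g := by
      intro g
      rw [MvPolynomial.eval_zero']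
      rfl
    have hg₂0 : MvPolynomial.eval (fun _ => (0 : ℤ)) g₂ ≠ 0 := by
      rw [heval]
      obtain ⟨d, hd⟩ := (MvPolynomial.ne_zero_iff.1 hg₂)
      have hd' : d ∈ g₂.support := MvPolynomial.mem_support_iff.2 hd
      rw [← hsupp₂ d hd']
      exact hd
    have hexp : q * (0 * (0 + 1) / 2) = 0 := by norm_num
    refine ⟨⟨fun _ => 0, fun i => by simp, hg₂0⟩,
      ⟨fun _ => 0, fun i => by simp, hg₂0, ?_⟩,
      fun p hp => ⟨fun _ => 0, fun i => by simp, hg₂0, ?_⟩⟩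
    · intro d hd
      rw [hsupp₁ d hd, heval, hexp, pow_zero, one_mul]
    · intro d hd
      rw [hsupp₁ d hd, heval, hexp, pow_zero, one_mul]
  · have hN1 : 1 ≤ N := Nat.pos_of_ne_zero hN0
    obtain ⟨u, hu1, hu2, hu3⟩ := keyLemma realAbs q N hN1 D₁ hN.1 g₁ g₂ hg₂
      (le_of_eq hD₁) (le_trans (le_of_eq hD₂) hN.2)
    refine ⟨⟨u, hu1, hu2⟩, ⟨u, hu1, hu2, ?_⟩, fun p hp => ?_⟩
    · intro d hd
      have h := hu3 d hd
      simp only [realAbs] at h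
      push_cast at h ⊢
      exact h
    · haveI : Fact p.Prime := ⟨hp⟩
      obtain ⟨w, hw1, hw2, hw3⟩ := keyLemma (padicAbs p) q N hN1 D₁ hN.1 g₁ g₂ hg₂
        (le_of_eq hD₁) (le_trans (le_of_eq hD₂) hN.2)
      refine ⟨w, hw1, hw2, fun d hd => ?_⟩
      have h := hw3 d hd
      simp only [padicAbs] at h
      push_cast at h ⊢
      exact h
end

section
/- Let $A_0 = \mathbb{Z}[z_1, \ldots, z_q]$ (with $z_1, \ldots, z_q$ algebraically independent over $\mathbb{Q}$), let $f \in A_0$ be nonzero, let $y$ be integral over $A_0$ with monic minimal polynomial $\mathcal{F} = X^D + \mathcal{F}_1 X^{D-1} + \cdots + \mathcal{F}_D \in A_0[X]$ over $\mathbb{Q}(z_1, \ldots, z_q)$, and set $B = A_0[y, f^{-1}]$. Let $\mathcal{H} = \Delta_{\mathcal{F}} \cdot \mathcal{F}_D \cdot f \in A_0$, where $\Delta_{\mathcal{F}}$ is the discriminant of $\mathcal{F}$ (taken to be $1$ if $D = 1$). Then for every $\mathbf{u} \in \mathbb{Z}^q$ with $\mathcal{H}(\mathbf{u}) \ne 0$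 and every root $\beta \in \overline{\mathbb{Q}}$ of the specialized polynomial $\mathcal{F}_{\mathbf{u}} = X^D + \mathcal{F}_1(\mathbf{u}) X^{D-1} + \cdots + \mathcal{F}_D(\mathbf{u})$, there exists a ring homomorphism $B \to \overline{\mathbb{Q}}$ sending $z_i \mapsto u_i$ for $i = 1, \ldots, q$ and $y \mapsto \beta$. -/
/-- The ring `B = A₀[y, f⁻¹]` where `A₀ = ℤ[z₁,…,z_q]` and `y` has monic minimal
polynomial `F` over the fraction field of `A₀`: concretely, the localization of
`A₀[X]/(F)` away from (the image of) `f`. -/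
abbrev Bring (q : ℕ) (F : Polynomial (MvPolynomial (Fin q) ℤ))
    (f : MvPolynomial (Fin q) ℤ) : Type :=
  Localization.Away ((Ideal.Quotient.mk (Ideal.span {F})) (Polynomial.C f))

/-- The canonical ring homomorphism `A₀[X] → B`. -/
noncomputable def toB (q : ℕ) (F : Polynomial (MvPolynomial (Fin q) ℤ))
    (f : MvPolynomial (Fin q) ℤ) :
    Polynomial (MvPolynomial (Fin q) ℤ) →+* Bring q F f :=
  letI : CommRing (Polynomial (MvPolynomial (Fin q) ℤ)) := Polynomial.commRing
  (algebraMap _ _).comp (Ideal.Quotient.mk (Ideal.span {F}))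

/-- Let `A₀ = ℤ[z₁,…,z_q]`, `f ∈ A₀` nonzero, `y` integral over `A₀`
with monic minimal polynomial `F = X^D + F₁X^{D-1} + ⋯ + F_D ∈ A₀[X]` over
`ℚ(z₁,…,z_q)`, and `B = A₀[y, f⁻¹]`. For `u ∈ ℤ^q` with `𝓗(u) ≠ 0`, where
`𝓗 = Δ_F · F_D · f` (equivalently: the specialized polynomial
`F_u = X^D + F₁(u)X^{D-1} + ⋯ + F_D(u)` is separable over `ℚ`, `F_D(u) ≠ 0` and
`f(u) ≠ 0`), and for every root `β ∈ ℚ̄` of `F_u`, there is a ring homomorphism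
`B → ℚ̄` with `zᵢ ↦ uᵢ` and `y ↦ β`. -/
theorem stmt_15 (q D : ℕ) (hD : 1 ≤ D) (F : Polynomial (MvPolynomial (Fin q) ℤ))
    (hmonic : F.Monic) (hdeg : F.natDegree = D)
    (hmin : Irreducible (F.map (algebraMap (MvPolynomial (Fin q) ℤ)
      (FractionRing (MvPolynomial (Fin q) ℤ)))))
    (f : MvPolynomial (Fin q) ℤ) (hf : f ≠ 0)
    (u : Fin q → ℤ)
    (Fu : Polynomial ℤ) (hFu : Fu = F.map (MvPolynomial.eval u))
    (hsep : Squarefree (Fu.map (Int.castRingHom ℚ)))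
    (hconst : Fu.coeff 0 ≠ 0)
    (hfu : MvPolynomial.eval u f ≠ 0)
    (β : AlgebraicClosure ℚ) (hβ : Polynomial.aeval β Fu = 0) :
    ∃ ψ : Bring q F f →+* AlgebraicClosure ℚ,
      (∀ i, ψ (toB q F f (Polynomial.C (MvPolynomial.X i))) =
        ((u i : ℤ) : AlgebraicClosure ℚ)) ∧
      ψ (toB q F f Polynomial.X) = β := by
  classical
  set g : MvPolynomial (Fin q) ℤ →+* AlgebraicClosure ℚ :=
    (Int.castRingHom (AlgebraicClosure ℚ)).comp (MvPolynomial.eval u) with hg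
  set φ : Polynomial (MvPolynomial (Fin q) ℤ) →+* AlgebraicClosure ℚ :=
    Polynomial.eval₂RingHom g β with hφ
  have key : ∀ p : Polynomial (MvPolynomial (Fin q) ℤ),
      Polynomial.aeval β (p.map (MvPolynomial.eval u)) = φ p := by
    intro p
    rw [Polynomial.aeval_def, Polynomial.eval₂_map, hφ, Polynomial.coe_eval₂RingHom]
    congr 1
  have hφF : φ F = 0 := by rw [← key F, ← hFu]; exact hβ
  have hker : Ideal.span {F} ≤ RingHom.ker φ := by
    rw [Ideal.span_le, Set.singleton_subset_iff]
    exact hφF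
  set φ' : (Polynomial (MvPolynomial (Fin q) ℤ)) ⧸ Ideal.span {F} →+* AlgebraicClosure ℚ :=
    Ideal.Quotient.lift _ φ (fun a ha => hker ha) with hφ'
  set b := (Ideal.Quotient.mk (Ideal.span {F})) (Polynomial.C f) with hb
  have hunit : IsUnit (φ' b) := by
    have h1 : φ' b = ((MvPolynomial.eval u f : ℤ) : AlgebraicClosure ℚ) := by
      simp [hφ', hφ, hg, hb]
    rw [h1]
    exact isUnit_iff_ne_zero.mpr (by exact_mod_cast hfu)
  set ψ : Localization.Away b →+* AlgebraicClosure ℚ :=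
    IsLocalization.Away.lift (S := Localization.Away b) b hunit with hψ
  have hcomp : ∀ a, ψ (toB q F f a) = φ a := by
    intro a
    rw [toB, RingHom.comp_apply, hψ, IsLocalization.Away.lift_eq, hφ']
    exact Ideal.Quotient.lift_mk _ _ _
  refine ⟨ψ, fun i => ?_, ?_⟩
  · rw [hcomp]; simp [hφ, hg]
  · rw [hcomp]; simp [hφ]
end

section
/- Let $\mathbf{k}$ be a field of characteristic $0$, $K_0$ a field extension of $\mathbf{k}$, and let $y_1, \ldots, y_t$ be elements of a finite extension $K$ of $K_0$ generating $K$ over $K_0$, with $D := [K : K_0]$. Then there exist integers $a_1, \ldots, a_t$ with $|a_i| \le D^2$ for all $i$ such that $w := a_1 y_1 + \cdots + a_t y_t$ satisfies $K = K_0(w)$. -/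
open Module IntermediateField Finset

/-- effective primitive element theorem: Let `K₀` be a field of
characteristic `0` (an extension of a field `k` of characteristic `0`), and let
`K = K₀(y₁, …, y_t)` be a finite extension of `K₀` of degree `D`. Then there are
integers `a₁, …, a_t` with `|aᵢ| ≤ D²` such that `w = a₁y₁ + ⋯ + a_t y_t`
generates `K` over `K₀`. -/
theorem stmt_18 (K₀ K : Type*) [Field K₀] [CharZero K₀] [Field K] [Algebra K₀ K]
    [FiniteDimensional K₀ K] (t : ℕ) (y : Fin t → K)
    (hgen : IntermediateField.adjoin K₀ (Set.range y) = ⊤) :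
    ∃ a : Fin t → ℤ,
      (∀ i, |a i| ≤ ((Module.finrank K₀ K : ℤ)) ^ 2) ∧
      IntermediateField.adjoin K₀ {∑ i, a i • y i} = ⊤ := by
  classical
  rcases Nat.eq_zero_or_pos t with rfl | ht
  · refine ⟨0, fun i => by simp [sq_nonneg], ?_⟩
    have h0 : Set.range y = ∅ := Set.range_eq_empty y
    rw [h0, IntermediateField.adjoin_empty] at hgen
    simp only [Pi.zero_apply, zero_smul, Finset.sum_const_zero]
    exact eq_top_iff.2 (hgen ▸ bot_le)
  set L := AlgebraicClosure K₀ with hL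
  haveI : CharZero L := charZero_of_injective_algebraMap (algebraMap K₀ L).injective
  haveI : Algebra.IsSeparable K₀ K := inferInstance
  set D := finrank K₀ K with hD
  have hcard : Fintype.card (K →ₐ[K₀] L) = D := AlgHom.card K₀ K L
  -- Step A: injectivity of evaluation at w implies w generates
  have hA : ∀ w : K, Function.Injective (fun σ : K →ₐ[K₀] L => σ w) →
      IntermediateField.adjoin K₀ {w} = ⊤ := by
    intro w hinj
    have hmem : w ∈ K₀⟮w⟯ := mem_adjoin_simple_self K₀ w
    have hinj2 : Function.Injective
        (fun σ : K →ₐ[K₀] L => σ.comp (K₀⟮w⟯).val) := by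
      intro σ τ h
      apply hinj
      simpa using AlgHom.congr_fun h ⟨w, hmem⟩
    have hle : Fintype.card (K →ₐ[K₀] L) ≤ Fintype.card (K₀⟮w⟯ →ₐ[K₀] L) :=
      Fintype.card_le_of_injective _ hinj2
    rw [hcard, AlgHom.card K₀ K₀⟮w⟯ L] at hle
    exact IntermediateField.eq_of_le_of_finrank_le le_top
      (by rwa [IntermediateField.finrank_top'])
  -- Step B: distinct embeddings differ on some generator
  have hB : ∀ σ τ : K →ₐ[K₀] L, σ ≠ τ → ∃ k, σ (y k) ≠ τ (y k) := by
    intro σ τ hne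
    by_contra h
    push_neg at h
    apply hne
    have hext : σ.comp (⊤ : IntermediateField K₀ K).val
        = τ.comp (⊤ : IntermediateField K₀ K).val := by
      apply IntermediateField.algHom_ext_of_eq_adjoin K₀ hgen.symm
      rintro x ⟨k, rfl⟩
      simpa using h k
    ext z
    simpa using AlgHom.congr_fun hext ⟨z, trivial⟩
  -- The box of coefficients
  set N : ℤ := (D : ℤ) ^ 2 with hN
  set M : ℕ := 2 * D ^ 2 + 1 with hMdef
  have hIccCard : (Finset.Icc (-N) N).card = M := by
    rw [Int.card_Icc]
    have : N + 1 - -N = ((2 * D ^ 2 + 1 : ℕ) : ℤ) := by push_cast [hN]; ring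
    rw [this, Int.toNat_natCast]
  set Box : Finset (Fin t → ℤ) :=
    Fintype.piFinset fun _ : Fin t => Finset.Icc (-N) N with hBoxdef
  have hBoxcard : Box.card = M ^ t := by
    rw [hBoxdef, Fintype.card_piFinset]
    simp [hIccCard]
  have hsum : ∀ (σ : K →ₐ[K₀] L) (c : Fin t → ℤ),
      σ (∑ i, c i • y i) = ∑ i, c i • σ (y i) := by
    intro σ c
    rw [map_sum]
    exact Finset.sum_congr rfl fun i _ => map_zsmul σ _ _
  -- per-pair bound
  have hpair : ∀ σ τ : K →ₐ[K₀] L, σ ≠ τ →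
      (Box.filter fun a => σ (∑ i, a i • y i) = τ (∑ i, a i • y i)).card
        ≤ M ^ (t - 1) := by
    intro σ τ hne
    obtain ⟨k, hk⟩ := hB σ τ hne
    set Box' : Finset (Fin t → ℤ) := Fintype.piFinset fun i : Fin t =>
      if i = k then ({0} : Finset ℤ) else Finset.Icc (-N) N with hBox'def
    have hBox'card : Box'.card = M ^ (t - 1) := by
      rw [hBox'def, Fintype.card_piFinset,
        ← Finset.mul_prod_erase _ _ (Finset.mem_univ k)]
      rw [if_pos rfl, Finset.card_singleton, one_mul]
      rw [Finset.prod_congr rfl fun i hi => by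
        rw [if_neg (Finset.ne_of_mem_erase hi), hIccCard]]
      rw [Finset.prod_const, Finset.card_erase_of_mem (Finset.mem_univ k),
        Finset.card_univ, Fintype.card_fin]
    rw [← hBox'card]
    apply Finset.card_le_card_of_injOn (fun a => Function.update a k 0)
    · intro a ha
      rw [Finset.mem_coe, Finset.mem_filter] at ha
      rw [Finset.mem_coe, hBox'def, Fintype.mem_piFinset]
      intro i
      by_cases hik : i = k
      · subst hik; simp
      · beta_reduce
        rw [Function.update_of_ne hik, if_neg hik]
        exact Fintype.mem_piFinset.1 ha.1 i
    · intro a ha b hb hab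
      simp only [Finset.mem_coe, Finset.mem_filter] at ha hb
      have hne' : ∀ i, i ≠ k → a i = b i := by
        intro i hi
        have := congrFun hab i
        simpa [Function.update_of_ne hi] using this
      have key : ∀ c : Fin t → ℤ, σ (∑ i, c i • y i) = τ (∑ i, c i • y i) →
          ∑ i, c i • (σ (y i) - τ (y i)) = 0 := by
        intro c hc
        simp only [smul_sub, Finset.sum_sub_distrib]
        rw [← hsum σ c, ← hsum τ c, hc, sub_self]
      have h1 := key a ha.2
      have h2 := key b hb.2
      have hsingle : ∑ i, (a i - b i) • (σ (y i) - τ (y i))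
          = (a k - b k) • (σ (y k) - τ (y k)) :=
        Finset.sum_eq_single_of_mem k (Finset.mem_univ k)
          (fun i _ hi => by rw [hne' i hi, sub_self, zero_smul])
      have h3 : (a k - b k) • (σ (y k) - τ (y k)) = 0 := by
        rw [← hsingle]
        calc ∑ i, (a i - b i) • (σ (y i) - τ (y i))
            = (∑ i, a i • (σ (y i) - τ (y i)))
                - ∑ i, b i • (σ (y i) - τ (y i)) := by
              rw [← Finset.sum_sub_distrib]
              exact Finset.sum_congr rfl fun i _ => sub_smul _ _ _
          _ = 0 := by rw [h1, h2, sub_self]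
      rw [zsmul_eq_mul] at h3
      have h5 : a k = b k := by
        rcases mul_eq_zero.mp h3 with h | h
        · have := Int.cast_eq_zero.mp h
          omega
        · exact absurd (sub_eq_zero.mp h) hk
      funext i
      by_cases hik : i = k
      · subst hik; exact h5
      · exact hne' i hik
  -- global counting
  set pairs := (Finset.univ : Finset (K →ₐ[K₀] L)).offDiag with hpairs
  have hbadsub :
      Box.filter (fun a => ¬ Function.Injective
          fun σ : K →ₐ[K₀] L => σ (∑ i, a i • y i))
        ⊆ pairs.biUnion fun p =>
            Box.filter fun a => p.1 (∑ i, a i • y i) = p.2 (∑ i, a i • y i) := by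
    intro a ha
    rw [Finset.mem_filter] at ha
    obtain ⟨haB, hni⟩ := ha
    rw [Function.not_injective_iff] at hni
    obtain ⟨σ, τ, heq, hneστ⟩ := hni
    exact Finset.mem_biUnion.2 ⟨(σ, τ),
      Finset.mem_offDiag.2 ⟨Finset.mem_univ _, Finset.mem_univ _, hneστ⟩,
      Finset.mem_filter.2 ⟨haB, heq⟩⟩
  have hpairscard : pairs.card < M := by
    rw [hpairs, Finset.offDiag_card, Finset.card_univ, hcard, hMdef]
    have : D ^ 2 = D * D := sq D
    omega
  have hbadcard :
      (Box.filter fun a => ¬ Function.Injective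
          fun σ : K →ₐ[K₀] L => σ (∑ i, a i • y i)).card < Box.card := by
    calc (Box.filter fun a => ¬ Function.Injective
            fun σ : K →ₐ[K₀] L => σ (∑ i, a i • y i)).card
        ≤ (pairs.biUnion fun p =>
            Box.filter fun a =>
              p.1 (∑ i, a i • y i) = p.2 (∑ i, a i • y i)).card :=
          Finset.card_le_card hbadsub
      _ ≤ ∑ p ∈ pairs, (Box.filter fun a =>
            p.1 (∑ i, a i • y i) = p.2 (∑ i, a i • y i)).card :=
          Finset.card_biUnion_le
      _ ≤ ∑ _p ∈ pairs, M ^ (t - 1) := by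
          apply Finset.sum_le_sum
          intro p hp
          exact hpair p.1 p.2 (Finset.mem_offDiag.1 hp).2.2
      _ = pairs.card * M ^ (t - 1) := by rw [Finset.sum_const, smul_eq_mul]
      _ < M * M ^ (t - 1) :=
          Nat.mul_lt_mul_of_lt_of_le hpairscard le_rfl (Nat.pos_of_ne_zero
            (pow_ne_zero _ (by omega)))
      _ = M ^ t := by
          rw [← pow_succ']
          congr 1
          omega
      _ = Box.card := hBoxcard.symm
  have hex : ∃ a ∈ Box, Function.Injective
      fun σ : K →ₐ[K₀] L => σ (∑ i, a i • y i) := by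
    by_contra hcon
    push_neg at hcon
    rw [Finset.filter_eq_self.2 fun a ha => hcon a ha] at hbadcard
    exact lt_irrefl _ hbadcard
  obtain ⟨a, haB, hainj⟩ := hex
  refine ⟨a, ?_, hA _ hainj⟩
  intro i
  have hai := Fintype.mem_piFinset.1 haB i
  rw [Finset.mem_Icc] at hai
  rw [abs_le]
  exact ⟨hai.1, hai.2⟩
end
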